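/- Let T=(V,E) be a tree with at least three vertices, let u, v ∈ V and let t ≥ 2 be an integer. If ε_T(u) ≥ ε_T(v), then ε_{S(T,t)}(u^t) ≥ ε_{S(T,t)}(v^t), where ε_{S(T,t)} denotes eccentricity in the generalized Sierpiński graph S(T,t). -/

import Mathlib

/-- The generalized Sierpiński graph `S(G,t)` of a base graph `G`: vertices are words of
length `t` over the vertex set (encoded as `Fin t → V`); two words are adjacent iff they are
of the form `w x y^{d-1}` and `w y x^{d-1}` for some edge `{x,y}` of `G`. -/
def SierpinskiGraph {V : Type*} (G : SimpleGraph V) (t : ℕ) : SimpleGraph (Fin t → V) where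
  Adj u v := ∃ i : Fin t, G.Adj (u i) (v i) ∧
      (∀ j : Fin t, j < i → u j = v j) ∧
      (∀ j : Fin t, i < j → u j = v i ∧ v j = u i)
  symm := by
    constructor
    rintro u v ⟨i, h1, h2, h3⟩
    exact ⟨i, h1.symm, fun j hj => (h2 j hj).symm, fun j hj => ⟨(h3 j hj).2, (h3 j hj).1⟩⟩
  loopless := by
    constructor
    rintro u ⟨i, h1, -, -⟩
    exact G.loopless.irrefl _ h1

/-- Eccentricity of a vertex: the maximum distance to any other vertex. -/
noncomputable def eccent {V : Type*} (G : SimpleGraph V) (v : V) : ℕ := ⨆ u, G.dist v u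

/-- Diameter: maximum eccentricity. -/
noncomputable def graphDiam {V : Type*} (G : SimpleGraph V) : ℕ := ⨆ v, eccent G v

/-- Radius: minimum eccentricity. -/
noncomputable def graphRadius {V : Type*} (G : SimpleGraph V) : ℕ := ⨅ v, eccent G v

/-!
Let `D` be the diameter of `T`. We show `ε(x^t) = (2^t - 1) ε(x) + (2^t - t - 1) (D - 2)`,
which is increasing in `ε(x)`.

Deleting the edge `y z^t — z y^t` between the blocks of two adjacent vertices `y, z` separates
`S(T, t+1)`, and each block is an isometric copy of `S(T, t)` (retract the rest of the graph onto
it). Hence a shortest path from `x^(t+1)` to a word `z w` with `z ≠ x` enters the block of `z` at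
`z y^t`, where `y` is the neighbour of `z` towards `x`. Together with
`d(α^t, β^t) = (2^t - 1) d(α, β)` this gives
`d(x^(t+1), z w) + (2^t - 1) = (2^(t+1) - 1) d(x, z) + d(y^t, w)`, and the formula follows by
induction on `t`: for the upper bound because a vertex `y` with two neighbours has
eccentricity `< D`, for the lower bound by measuring the distance to the word `p q p q ⋯`, where
`p, q` is a diametral pair with `ε(x) = d(x, p)` (in a tree `ε(x) = max(d(x, p), d(x, q))`).
-/

namespace SimpleGraph

section Metric

variable {α β : Type*} {G : SimpleGraph α} {H : SimpleGraph β}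

theorem Walk.exists_length_le_of_adj_or_eq (f : α → β)
    (hf : ∀ ⦃x y⦄, G.Adj x y → H.Adj (f x) (f y) ∨ f x = f y) {u v : α} (p : G.Walk u v) :
    ∃ q : H.Walk (f u) (f v), q.length ≤ p.length := by
  induction p with
  | nil => exact ⟨.nil, le_rfl⟩
  | cons h p ih =>
    obtain ⟨q, hq⟩ := ih
    rcases hf h with h' | h'
    · exact ⟨.cons h' q, by simpa using hq⟩
    · exact ⟨q.copy h'.symm rfl, by simp only [Walk.length_copy, Walk.length_cons]; omega⟩

theorem dist_le_of_adj_or_eq (f : α → β)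
    (hf : ∀ ⦃x y⦄, G.Adj x y → H.Adj (f x) (f y) ∨ f x = f y) {u v : α} (hr : G.Reachable u v) :
    H.dist (f u) (f v) ≤ G.dist u v := by
  obtain ⟨p, hp⟩ := hr.exists_walk_length_eq_dist
  obtain ⟨q, hq⟩ := p.exists_length_le_of_adj_or_eq f hf
  exact (dist_le q).trans (hq.trans hp.le)

theorem Walk.dist_add_one_add_dist_le_length_of_cut (hG : G.Connected) (P : α → Prop)
    {s s' : α} (hcut : ∀ ⦃x y⦄, G.Adj x y → P x → ¬ P y → x = s ∧ y = s') {u v : α}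
    (p : G.Walk u v) (hu : P u) (hv : ¬ P v) : G.dist u s + 1 + G.dist s' v ≤ p.length := by
  induction p with
  | nil => exact absurd hu hv
  | @cons u w v h p ih =>
    by_cases hw : P w
    · have := hG.dist_triangle (u := u) (v := w) (w := s)
      have := ih hw hv
      rw [dist_eq_one_iff_adj.mpr h] at *
      simp only [Walk.length_cons]
      omega
    · obtain ⟨rfl, rfl⟩ := hcut h hu hw
      have := dist_le p
      simp only [Walk.length_cons, dist_self]
      omega

theorem Connected.dist_eq_of_cut (hG : G.Connected) (P : α → Prop) {s s' : α}
    (hss' : G.Adj s s') (hcut : ∀ ⦃x y⦄, G.Adj x y → P x → ¬ P y → x = s ∧ y = s')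
    {u v : α} (hu : P u) (hv : ¬ P v) : G.dist u v = G.dist u s + 1 + G.dist s' v := by
  refine le_antisymm ?_ ?_
  · have := hG.dist_triangle (u := u) (v := s) (w := v)
    have := hG.dist_triangle (u := s) (v := s') (w := v)
    rw [dist_eq_one_iff_adj.mpr hss'] at *
    omega
  · obtain ⟨p, hp⟩ := hG.exists_walk_length_eq_dist u v
    exact hp ▸ p.dist_add_one_add_dist_le_length_of_cut hG P hcut hu hv

end Metric

variable {V : Type*} {G T : SimpleGraph V}

open Classical in
noncomputable def stepToward (G : SimpleGraph V) (x z : V) : V :=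
  if h : ∃ b, G.Adj x b ∧ G.dist b z < G.dist x z then h.choose else x

theorem Connected.stepToward_spec (hG : G.Connected) {x z : V} (hxz : x ≠ z) :
    G.Adj x (G.stepToward x z) ∧ G.dist (G.stepToward x z) z + 1 = G.dist x z := by
  have hex : ∃ b, G.Adj x b ∧ G.dist b z < G.dist x z := by
    obtain ⟨p, -, hp⟩ := hG.exists_path_of_dist x z
    cases p with
    | nil => exact absurd rfl hxz
    | cons h q => exact ⟨_, h, by have := dist_le q; simp only [Walk.length_cons] at hp; omega⟩
  rw [stepToward, dif_pos hex]
  obtain ⟨hadj, hlt⟩ := hex.choose_spec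
  have := hG.dist_triangle (u := x) (v := hex.choose) (w := z)
  rw [dist_eq_one_iff_adj.mpr hadj] at this
  exact ⟨hadj, by omega⟩

theorem IsAcyclic.eq_of_adj_of_dist_lt (hT : T.IsAcyclic) {x n₁ n₂ z : V} (h₁ : T.Adj x n₁)
    (h₂ : T.Adj x n₂) (hd₁ : T.dist n₁ z < T.dist x z) (hd₂ : T.dist n₂ z < T.dist x z) :
    n₁ = n₂ := by
  classical
  have hzx : T.Reachable z x := Reachable.of_dist_ne_zero (by rw [dist_comm]; omega)
  obtain ⟨P, hP, -⟩ := hzx.exists_path_of_dist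
  have key : ∀ n, T.Adj x n → T.dist n z < T.dist x z → n = P.penultimate := by
    intro n hn hd
    obtain ⟨q, hq, hql⟩ := (hzx.trans hn.reachable).exists_path_of_dist
    have hx : x ∉ q.support := fun hx => by
      have := (dist_le (q.takeUntil x hx)).trans (q.length_takeUntil_le_length hx)
      rw [hql, dist_comm (u := z) (v := n), dist_comm (u := z) (v := x)] at this
      omega
    exact hT.eq_penultimate_of_adj_end hP hn
      (hT.mem_support_of_ne_mem_support_of_adj_of_isPath hP hq hn hx)
  rw [key n₁ h₁ hd₁, key n₂ h₂ hd₂]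

namespace IsTree

variable (hT : T.IsTree)
include hT

theorem stepToward_eq {x b z : V} (hb : T.Adj x b) (hd : T.dist b z < T.dist x z) :
    T.stepToward x z = b := by
  have hxz : x ≠ z := by rintro rfl; simp at hd
  obtain ⟨h₁, h₂⟩ := hT.connected.stepToward_spec hxz
  exact hT.isAcyclic.eq_of_adj_of_dist_lt h₁ hb (by omega) hd

theorem stepToward_eq_of_adj {a x y : V} (hxy : T.Adj x y) (hx : x ≠ a) (hy : y ≠ a) :
    T.stepToward a x = T.stepToward a y := by
  have key : ∀ x y, T.Adj x y → x ≠ a → T.dist a y = T.dist a x + 1 →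
      T.stepToward a x = T.stepToward a y := by
    intro x y hxy hx hd
    obtain ⟨hs, hsx⟩ := hT.connected.stepToward_spec hx.symm
    have := hT.connected.dist_triangle (u := T.stepToward a x) (v := x) (w := y)
    rw [dist_eq_one_iff_adj.mpr hxy] at this
    exact (hT.stepToward_eq hs (by omega)).symm
  rcases hT.dist_eq_dist_add_one_of_adj a hxy with h | h
  · exact (key y x hxy.symm hy h).symm
  · exact key x y hxy hx h

theorem dist_eq_add_of_stepToward_ne {x a b : V} (ha : x ≠ a) (hb : x ≠ b)
    (hab : T.stepToward x a ≠ T.stepToward x b) : T.dist a b = T.dist a x + T.dist x b := by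
  induction hn : T.dist x b using Nat.strong_induction_on generalizing x with
  | _ n ih =>
  subst hn
  have hc := hT.connected
  obtain ⟨hxs, hsb⟩ := hc.stepToward_spec hb
  set s := T.stepToward x b
  have has : T.dist a s = T.dist a x + 1 := by
    rcases hT.dist_eq_dist_add_one_of_adj a hxs with h | h
    · refine absurd (hT.stepToward_eq hxs ?_) hab
      rw [dist_comm (u := s), dist_comm (u := x)]
      omega
    · exact h
  by_cases hs : s = b
  · rw [← hs, has, dist_eq_one_iff_adj.mpr hxs]
  have hsa : s ≠ a := by rintro h; rw [h, dist_self] at has; omega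
  have hback : T.stepToward s a = x :=
    hT.stepToward_eq hxs.symm (by rw [dist_comm (u := x), dist_comm (u := s)]; omega)
  have hfwd : T.stepToward s b ≠ x := by
    intro h
    have := (hc.stepToward_spec hs).2
    rw [h] at this
    omega
  have := ih _ (by omega) hsa hs (hback ▸ hfwd.symm) rfl
  omega

theorem dist_le_max_of_forall_dist_le {p q : V} (hpq : ∀ a b, T.dist a b ≤ T.dist p q)
    (x z : V) : T.dist x z ≤ max (T.dist x p) (T.dist x q) := by
  induction hn : T.dist x z generalizing x with
  | zero => exact Nat.zero_le _
  | succ n ih =>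
  have hc := hT.connected
  have hxz : x ≠ z := by rintro rfl; simp at hn
  by_cases hxp : x = p
  · subst hxp; exact le_max_of_le_right (hn ▸ hpq x z)
  by_cases hxq : x = q
  · subst hxq; exact le_max_of_le_left (hn ▸ dist_comm (u := x) (v := p) ▸ hpq x z)
  set s := T.stepToward x z
  by_cases hsp : T.stepToward x p ≠ s
  · have := hT.dist_eq_add_of_stepToward_ne hxp hxz hsp
    have := hpq p z
    have := hc.dist_triangle (u := p) (v := x) (w := q)
    rw [dist_comm (u := p) (v := x)] at *
    omega
  by_cases hsq : T.stepToward x q ≠ s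
  · have := hT.dist_eq_add_of_stepToward_ne hxq hxz hsq
    have := hpq q z
    have := hc.dist_triangle (u := q) (v := x) (w := p)
    rw [dist_comm (u := q) (v := x), dist_comm (u := q) (v := p)] at *
    omega
  push Not at hsp hsq
  -- all three first steps agree, so move to `s`
  have hz : T.dist s z + 1 = n + 1 := hn ▸ (hc.stepToward_spec hxz).2
  have hp := (hc.stepToward_spec hxp).2
  have hq := (hc.stepToward_spec hxq).2
  rw [hsp] at hp
  rw [hsq] at hq
  have := ih s (by omega)
  omega

theorem eq_and_eq_of_adj_of_dist_lt {a b x y : V} (hab : T.Adj a b) (hxy : T.Adj x y)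
    (hx : T.dist a x < T.dist b x) (hy : T.dist b y < T.dist a y) : x = a ∧ y = b := by
  have hc := hT.connected
  have hxb : T.dist b x = T.dist a x + 1 := by
    have := hT.dist_eq_dist_add_one_of_adj x hab
    rw [dist_comm (u := x), dist_comm (u := x)] at this
    omega
  have hya : T.dist a y = T.dist b y + 1 := by
    have := hT.dist_eq_dist_add_one_of_adj y hab
    rw [dist_comm (u := y), dist_comm (u := y)] at this
    omega
  by_cases hxa : x = a
  · subst hxa
    rw [dist_eq_one_iff_adj.mpr hxy] at hya
    exact ⟨rfl, (hc.dist_eq_zero_iff.mp (by omega)).symm⟩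
  exfalso
  obtain ⟨hxs, hsa⟩ := hc.stepToward_spec hxa
  set s := T.stepToward x a
  have := hc.dist_triangle (u := b) (v := y) (w := x)
  have := hc.dist_triangle (u := b) (v := a) (w := s)
  rw [dist_eq_one_iff_adj.mpr hxy.symm, dist_eq_one_iff_adj.mpr hab.symm] at *
  have : T.dist s a = T.dist a s := dist_comm
  have : T.dist x a = T.dist a x := dist_comm
  rcases hT.dist_eq_dist_add_one_of_adj a hxy with hay | hay
  · omega
  -- otherwise `y` and `s` would be two neighbours of `x` closer to `b`
  have : T.dist y b = T.dist b y := dist_comm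
  have : T.dist x b = T.dist b x := dist_comm
  have : T.dist s b = T.dist b s := dist_comm
  have : T.dist y a = T.dist a y := dist_comm
  have hys := hT.isAcyclic.eq_of_adj_of_dist_lt (z := b) hxy hxs (by omega) (by omega)
  rw [← hys] at hsa
  omega

theorem dist_lt_of_adj_of_adj {D : ℕ} {c n₁ n₂ : V} (hD : ∀ a b, T.dist a b ≤ D)
    (h₁ : T.Adj c n₁) (h₂ : T.Adj c n₂) (hne : n₁ ≠ n₂) (y : V) : T.dist c y < D := by
  by_contra! h
  have closer : ∀ n, T.Adj c n → T.dist n y < T.dist c y := fun n hn => by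
    have := hT.dist_eq_dist_add_one_of_adj y hn
    have := hD y n
    rw [dist_comm (u := y) (v := c), dist_comm (u := y) (v := n)] at *
    omega
  exact hne (hT.isAcyclic.eq_of_adj_of_dist_lt h₁ h₂ (closer n₁ h₁) (closer n₂ h₂))

theorem two_le_diam [Fintype V] (hcard : 3 ≤ Fintype.card V) : 2 ≤ T.diam := by
  obtain ⟨a, b, c, hab, hac, hbc⟩ := Fintype.two_lt_card_iff.mp hcard
  have : Nonempty V := ⟨a⟩
  have hfin : T.ediam ≠ ⊤ := connected_iff_ediam_ne_top.mp hT.connected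
  by_contra! h
  have adj : ∀ {u v : V}, u ≠ v → T.Adj u v := fun {u v} huv => by
    have := hT.connected.pos_dist_of_ne huv
    have := dist_le_diam hfin (u := u) (v := v)
    exact dist_eq_one_iff_adj.mp (by omega)
  apply hT.dist_ne_of_adj a (adj hbc)
  rw [dist_eq_one_iff_adj.mpr (adj hab), dist_eq_one_iff_adj.mpr (adj hac)]

end IsTree

end SimpleGraph

theorem dist_le_eccent {α : Type*} [Finite α] (G : SimpleGraph α) (x z : α) :
    G.dist x z ≤ eccent G x :=
  le_ciSup (Finite.bddAbove_range _) z

theorem Nat.two_pow_succ_sub_one (t : ℕ) : 2 ^ (t + 1) - 1 = (2 ^ t - 1) + 2 ^ t := by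
  rw [pow_succ]
  have : 1 ≤ 2 ^ t := Nat.one_le_two_pow
  omega

theorem Nat.two_pow_succ_sub_succ_sub_one (t : ℕ) :
    2 ^ (t + 1) - (t + 1) - 1 = (2 ^ t - t - 1) + (2 ^ t - 1) := by
  rw [pow_succ]
  have : t < 2 ^ t := Nat.lt_two_pow_self
  omega

namespace SierpinskiGraph

open SimpleGraph hiding eccent

variable {V : Type*} {G T : SimpleGraph V} {t : ℕ}

theorem adj_cons_cons (a : V) {w w' : Fin t → V} (h : (SierpinskiGraph G t).Adj w w') :
    (SierpinskiGraph G (t + 1)).Adj (Fin.cons a w) (Fin.cons a w') := by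
  obtain ⟨i, h1, h2, h3⟩ := h
  refine ⟨i.succ, by simpa using h1, fun j hj => ?_, fun j hj => ?_⟩
  · cases j using Fin.cases with
    | zero => rfl
    | succ k => simpa using h2 k (Fin.succ_lt_succ_iff.mp hj)
  · cases j using Fin.cases with
    | zero => exact absurd hj (Fin.not_lt_zero _)
    | succ k => simpa using h3 k (Fin.succ_lt_succ_iff.mp hj)

theorem adj_cons_const {a b : V} (h : G.Adj a b) :
    (SierpinskiGraph G (t + 1)).Adj (Fin.cons a fun _ => b) (Fin.cons b fun _ => a) := by
  refine ⟨0, by simpa using h, fun j hj => absurd hj (Fin.not_lt_zero j), fun j hj => ?_⟩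
  cases j using Fin.cases with
  | zero => exact absurd hj (lt_irrefl _)
  | succ k => simp

theorem adj_succ_cases {u v : Fin (t + 1) → V} (h : (SierpinskiGraph G (t + 1)).Adj u v) :
    (u 0 = v 0 ∧ (SierpinskiGraph G t).Adj (Fin.tail u) (Fin.tail v)) ∨
      (G.Adj (u 0) (v 0) ∧ u = Fin.cons (u 0) (fun _ => v 0) ∧
        v = Fin.cons (v 0) (fun _ => u 0)) := by
  obtain ⟨i, h1, h2, h3⟩ := h
  cases i using Fin.cases with
  | zero =>
    refine .inr ⟨h1, funext fun j => ?_, funext fun j => ?_⟩ <;>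
    cases j using Fin.cases with
    | zero => rfl
    | succ k => simp [h3 k.succ (Fin.succ_pos k)]
  | succ i =>
    exact .inl ⟨h2 0 (Fin.succ_pos i), i, h1, fun j hj => h2 j.succ (Fin.succ_lt_succ_iff.mpr hj),
      fun j hj => h3 j.succ (Fin.succ_lt_succ_iff.mpr hj)⟩

theorem cons_const (x : V) : (Fin.cons x fun _ => x : Fin (t + 1) → V) = fun _ => x := by
  funext j
  cases j using Fin.cases <;> rfl

def consHom (G : SimpleGraph V) (t : ℕ) (a : V) :
    SierpinskiGraph G t →g SierpinskiGraph G (t + 1) where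
  toFun w := Fin.cons a w
  map_rel' h := adj_cons_cons a h

theorem connected (hG : G.Connected) : ∀ t, (SierpinskiGraph G t).Connected
  | 0 => (connected_iff _).mpr ⟨fun u v => by rw [Subsingleton.elim u v], ⟨Fin.elim0⟩⟩
  | t + 1 => by
    have ih := connected hG t
    have key : ∀ {a b : V} (p : G.Walk a b) (w w' : Fin t → V),
        (SierpinskiGraph G (t + 1)).Reachable (Fin.cons a w) (Fin.cons b w') := by
      intro a b p
      induction p with
      | @nil a => exact fun w w' => (ih.preconnected w w').map (consHom G t a)
      | @cons a _ _ h p ihp =>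
        exact fun w w' => ((ih.preconnected w _).map (consHom G t a)).trans
          ((adj_cons_const h).reachable.trans (ihp _ w'))
    refine (connected_iff _).mpr ⟨fun u v => ?_, hG.nonempty.map fun x _ => x⟩
    rw [← Fin.cons_self_tail u, ← Fin.cons_self_tail v]
    exact key (hG.preconnected _ _).some _ _

def zigzag : (t : ℕ) → V → V → Fin t → V
  | 0, _, _ => Fin.elim0
  | t + 1, p, q => Fin.cons p (zigzag t q p)

section Tree

variable (hT : T.IsTree)
include hT

theorem dist_cons_cons (a : V) (w w' : Fin t → V) :
    (SierpinskiGraph T (t + 1)).dist (Fin.cons a w) (Fin.cons a w') =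
      (SierpinskiGraph T t).dist w w' := by
  classical
  refine le_antisymm (dist_le_of_adj_or_eq (consHom T t a)
    (fun _ _ h => .inl ((consHom T t a).map_adj h)) ((connected hT.connected t).preconnected w w')) ?_
  -- retract every other block onto the copy of the neighbour of `a` through which it is reached
  let ψ : (Fin (t + 1) → V) → Fin t → V :=
    fun u => if u 0 = a then Fin.tail u else fun _ => T.stepToward a (u 0)
  have step_adj : ∀ {b}, T.Adj a b → T.stepToward a b = b := fun hab =>
    hT.stepToward_eq hab (by simp [dist_eq_one_iff_adj.mpr hab])
  have hψ : ∀ ⦃u v⦄, (SierpinskiGraph T (t + 1)).Adj u v →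
      (SierpinskiGraph T t).Adj (ψ u) (ψ v) ∨ ψ u = ψ v := by
    intro u v h
    rcases adj_succ_cases h with ⟨h0, htl⟩ | ⟨hadj, hu, hv⟩
    · by_cases hu0 : u 0 = a
      · exact .inl (by simpa [ψ, hu0, ← h0] using htl)
      · exact .inr (by simp [ψ, hu0, ← h0])
    refine .inr ?_
    by_cases hu0 : u 0 = a
    · have hv0 : v 0 ≠ a := hu0 ▸ hadj.ne.symm
      rw [hu]
      simp [ψ, hu0, hv0, step_adj (hu0 ▸ hadj)]
    by_cases hv0 : v 0 = a
    · rw [hv]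
      simp [ψ, hu0, hv0, step_adj (hv0 ▸ hadj.symm)]
    simp [ψ, hu0, hv0, hT.stepToward_eq_of_adj hadj hu0 hv0]
  simpa [ψ] using dist_le_of_adj_or_eq ψ hψ
    ((connected hT.connected (t + 1)).preconnected (Fin.cons a w) (Fin.cons a w'))

theorem dist_cons_eq_of_adj {y z : V} (hyz : T.Adj y z) {u : Fin (t + 1) → V}
    (hu : T.dist y (u 0) < T.dist z (u 0)) (w : Fin t → V) :
    (SierpinskiGraph T (t + 1)).dist u (Fin.cons z w) =
      (SierpinskiGraph T (t + 1)).dist u (Fin.cons y fun _ => z) + 1 +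
        (SierpinskiGraph T t).dist (fun _ => y) w := by
  rw [(connected hT.connected (t + 1)).dist_eq_of_cut (fun v => T.dist y (v 0) < T.dist z (v 0))
    (adj_cons_const hyz) ?_ hu (by simp), dist_cons_cons hT]
  intro v v' h hv hv'
  simp only [not_lt] at hv hv'
  rcases adj_succ_cases h with ⟨h0, -⟩ | ⟨hadj, hveq, hv'eq⟩
  · rw [h0] at hv
    omega
  · have := hT.dist_ne_of_adj (v' 0) hyz
    rw [dist_comm (u := v' 0), dist_comm (u := v' 0)] at this
    obtain ⟨h1, h2⟩ := hT.eq_and_eq_of_adj_of_dist_lt hyz hadj hv (by omega)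
    rw [hveq, hv'eq, h1, h2]
    exact ⟨rfl, rfl⟩

theorem dist_const_cons_const
    (hD : ∀ α β : V, (SierpinskiGraph T t).dist (fun _ => α) (fun _ => β) =
      (2 ^ t - 1) * T.dist α β)
    {x y z : V} (hyz : T.Adj y z) (hxy : T.dist y x + 1 = T.dist z x) :
    (SierpinskiGraph T (t + 1)).dist (fun _ => x) (Fin.cons y fun _ => z) + 2 ^ t =
      (2 ^ (t + 1) - 1) * T.dist z x := by
  have h2t : 2 ^ (t + 1) = 2 * 2 ^ t := by rw [pow_succ, mul_comm]
  have h1 : 1 ≤ 2 ^ t := Nat.one_le_two_pow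
  induction hn : T.dist y x generalizing y z with
  | zero =>
    obtain rfl := (hT.connected.dist_eq_zero_iff.mp hn).symm
    rw [SimpleGraph.dist_comm (u := z), dist_eq_one_iff_adj.mpr hyz,
      ← cons_const (t := t) x, dist_cons_cons hT, hD, dist_eq_one_iff_adj.mpr hyz]
    omega
  | succ n ih =>
    have hyx : y ≠ x := by rintro rfl; simp at hn
    obtain ⟨hyy', hy'x⟩ := hT.connected.stepToward_spec hyx
    set y' := T.stepToward y x
    have hzy' : T.dist z y' = 2 := by
      have hy'z : y' ≠ z := by rintro rfl; omega
      have := hT.dist_eq_dist_add_one_of_adj z hyy'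
      rw [SimpleGraph.dist_comm, dist_eq_one_iff_adj.mpr hyz] at this
      have := hT.connected.pos_dist_of_ne hy'z.symm
      omega
    rw [dist_cons_eq_of_adj hT hyy'.symm (by omega), hD, SimpleGraph.dist_comm (u := y'), hzy']
    have := ih hyy'.symm hy'x (by omega)
    rw [← hxy, Nat.mul_add_one (2 ^ (t + 1) - 1)]
    omega

theorem dist_const_const : ∀ (t : ℕ) (α β : V),
    (SierpinskiGraph T t).dist (fun _ => α) (fun _ => β) = (2 ^ t - 1) * T.dist α β
  | 0, α, β => by simp [Subsingleton.elim (fun _ : Fin 0 => α) fun _ => β]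
  | t + 1, α, β => by
    obtain rfl | hβα := eq_or_ne β α
    · simp
    obtain ⟨hβy, hyα⟩ := hT.connected.stepToward_spec hβα
    have := dist_const_cons_const hT (dist_const_const t) hβy.symm hyα
    rw [← cons_const β, dist_cons_eq_of_adj hT hβy.symm (by omega), dist_const_const t,
      SimpleGraph.dist_comm (v := β), dist_eq_one_iff_adj.mpr hβy, SimpleGraph.dist_comm (u := α)]
    have : 1 ≤ 2 ^ t := Nat.one_le_two_pow
    omega

theorem dist_const_cons {x y z : V} (hyz : T.Adj y z) (hxy : T.dist y x + 1 = T.dist z x)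
    (w : Fin t → V) :
    (SierpinskiGraph T (t + 1)).dist (fun _ => x) (Fin.cons z w) + (2 ^ t - 1) =
      (2 ^ (t + 1) - 1) * T.dist z x + (SierpinskiGraph T t).dist (fun _ => y) w := by
  have := dist_const_cons_const hT (dist_const_const hT t) hyz hxy
  have : 1 ≤ 2 ^ t := Nat.one_le_two_pow
  rw [dist_cons_eq_of_adj hT hyz (by omega)]
  omega

theorem dist_const_le [Finite V] {D : ℕ} (hD : ∀ a b, T.dist a b ≤ D) :
    ∀ (t : ℕ) (x : V) (w : Fin t → V), (SierpinskiGraph T t).dist (fun _ => x) w ≤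
      (2 ^ t - 1) * eccent T x + (2 ^ t - t - 1) * (D - 2)
  | 0, x, w => by simp [Subsingleton.elim (fun _ : Fin 0 => x) w]
  | t + 1, x, w => by
    have ih := dist_const_le hD t
    rw [← Fin.cons_self_tail w, Nat.two_pow_succ_sub_one, Nat.two_pow_succ_sub_succ_sub_one]
    by_cases hzx : w 0 = x
    · rw [hzx, ← cons_const, dist_cons_cons hT, add_mul, add_mul]
      have := ih x (Fin.tail w)
      omega
    obtain ⟨hzy, hyx⟩ := hT.connected.stepToward_spec hzx
    set y := T.stepToward (w 0) x
    have key := dist_const_cons hT hzy.symm hyx (Fin.tail w)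
    rw [Nat.two_pow_succ_sub_one] at key
    by_cases hyx' : y = x
    · rw [hyx', SimpleGraph.dist_self] at hyx
      rw [hyx', ← hyx, zero_add, mul_one] at key
      have : 1 ≤ eccent T x := by
        have := dist_le_eccent T x (w 0)
        rw [SimpleGraph.dist_comm] at this
        omega
      have := Nat.le_mul_of_pos_right (2 ^ t) this
      have := ih x (Fin.tail w)
      rw [add_mul, add_mul]
      omega
    -- `y` has the two neighbours `w 0` and `stepToward y x`, hence `ε(y) < D`
    obtain ⟨hyy', hy'x⟩ := hT.connected.stepToward_spec hyx'
    have hne : w 0 ≠ T.stepToward y x := fun h => by rw [← h] at hy'x; omega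
    have : Nonempty V := ⟨x⟩
    have hy : eccent T y ≤ D - 1 :=
      ciSup_le fun v => Nat.le_sub_one_of_lt (hT.dist_lt_of_adj_of_adj hD hzy.symm hyy' hne v)
    have := hT.connected.pos_dist_of_ne hyx'
    have := dist_le_eccent T y x
    obtain ⟨m, rfl⟩ : ∃ m, D = m + 2 := ⟨D - 2, by omega⟩
    have := ih y (Fin.tail w)
    have := Nat.mul_le_mul_left (2 ^ t - 1 + 2 ^ t)
      (SimpleGraph.dist_comm (u := x) ▸ dist_le_eccent T x (w 0))
    have := Nat.mul_le_mul_left (2 ^ t - 1) (show eccent T y ≤ m + 1 by omega)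
    simp only [Nat.add_sub_cancel, Nat.mul_add_one] at *
    rw [add_mul (2 ^ t - t - 1)]
    omega

theorem le_dist_const_zigzag : ∀ (t : ℕ) {p q x : V}, (∀ a b, T.dist a b ≤ T.dist p q) →
    2 ≤ T.dist p q → x ≠ p →
    (2 ^ t - 1) * T.dist p x + (2 ^ t - t - 1) * (T.dist p q - 2) ≤
      (SierpinskiGraph T t).dist (fun _ => x) (zigzag t p q)
  | 0, _, _, _, _, _, _ => by simp
  | t + 1, p, q, x, hpq, h2, hxp => by
    obtain ⟨hpy, hyx⟩ := hT.connected.stepToward_spec hxp.symm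
    set y := T.stepToward p x
    obtain ⟨m, hm⟩ : ∃ m, T.dist p q = m + 2 := ⟨_, (Nat.sub_add_cancel h2).symm⟩
    have hqp : T.dist q p = T.dist p q := SimpleGraph.dist_comm
    have hyq : m + 1 ≤ T.dist q y := by
      have := hT.connected.dist_triangle (u := q) (v := y) (w := p)
      rw [SimpleGraph.dist_comm (u := y), dist_eq_one_iff_adj.mpr hpy] at this
      omega
    have ih := le_dist_const_zigzag t (p := q) (q := p) (x := y) (hqp ▸ hpq) (by omega)
      (by rintro rfl; simp at hyq)
    have key := dist_const_cons hT hpy.symm hyx (zigzag t q p)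
    have := Nat.mul_le_mul_left (2 ^ t - 1) hyq
    rw [hqp, hm, Nat.add_sub_cancel] at ih
    rw [Nat.mul_add_one] at this
    rw [hm, Nat.add_sub_cancel, Nat.two_pow_succ_sub_succ_sub_one, add_mul (2 ^ t - t - 1)]
    change _ ≤ (SierpinskiGraph T (t + 1)).dist _ (Fin.cons p (zigzag t q p))
    omega

theorem eccent_const [Finite V] (h2 : 2 ≤ T.diam) (t : ℕ) (x : V) :
    eccent (SierpinskiGraph T t) (fun _ => x) =
      (2 ^ t - 1) * eccent T x + (2 ^ t - t - 1) * (T.diam - 2) := by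
  have : Nonempty V := ⟨x⟩
  have hD : ∀ a b, T.dist a b ≤ T.diam := fun a b =>
    dist_le_diam (connected_iff_ediam_ne_top.mp hT.connected)
  refine le_antisymm (ciSup_le fun w => dist_const_le hT hD t x w) ?_
  obtain ⟨p, q, hpq⟩ := T.exists_dist_eq_diam
  wlog hqp : T.dist x q ≤ T.dist x p generalizing p q
  · exact this q p (SimpleGraph.dist_comm.trans hpq) (by omega)
  have hx : eccent T x ≤ T.dist p x := ciSup_le fun z => by
    have := hT.dist_le_max_of_forall_dist_le (hpq ▸ hD) x z
    rw [SimpleGraph.dist_comm (u := p)]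
    omega
  have hxp : x ≠ p := by
    rintro rfl
    have : T.dist x q ≤ eccent T x := dist_le_eccent T x q
    simp only [SimpleGraph.dist_self] at hx
    omega
  calc (2 ^ t - 1) * eccent T x + (2 ^ t - t - 1) * (T.diam - 2)
      ≤ (2 ^ t - 1) * T.dist p x + (2 ^ t - t - 1) * (T.dist p q - 2) := by rw [hpq]; gcongr
    _ ≤ (SierpinskiGraph T t).dist (fun _ => x) (zigzag t p q) :=
      le_dist_const_zigzag hT t (hpq ▸ hD) (hpq ▸ h2) hxp
    _ ≤ eccent (SierpinskiGraph T t) (fun _ => x) := dist_le_eccent _ _ _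

end Tree

end SierpinskiGraph

theorem stmt_13_general {V : Type*} [Fintype V] (T : SimpleGraph V) (hT : T.IsTree)
    (hcard : 3 ≤ Fintype.card V) (u v : V) (t : ℕ)
    (h : eccent T v ≤ eccent T u) :
    eccent (SierpinskiGraph T t) (fun _ : Fin t => v) ≤
      eccent (SierpinskiGraph T t) (fun _ : Fin t => u) := by
  have h2 := hT.two_le_diam hcard
  rw [SierpinskiGraph.eccent_const hT h2, SierpinskiGraph.eccent_const hT h2]
  gcongr

/-- for a finite tree `T` with at least three vertices, `t ≥ 2`, and
`u, v ∈ V`: if `ε_T(u) ≥ ε_T(v)` then `ε_{S(T,t)}(u^t) ≥ ε_{S(T,t)}(v^t)`. -/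
theorem stmt_13 {V : Type*} [Fintype V] (T : SimpleGraph V) (hT : T.IsTree)
    (hcard : 3 ≤ Fintype.card V) (u v : V) (t : ℕ) (ht : 2 ≤ t)
    (h : eccent T v ≤ eccent T u) :
    eccent (SierpinskiGraph T t) (fun _ : Fin t => v) ≤
      eccent (SierpinskiGraph T t) (fun _ : Fin t => u) :=
  stmt_13_general T hT hcard u v t h
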